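/- arXiv:2410.09082 — 3 statements merged into one kernel-verified Lean document; each statement's English description precedes it below -/
import Mathlib

section
/- Hyperstability of the quadratic equation in modular spaces: Let X be a vector space over a field K, Y_ρ a convex modular space satisfying the Δ₂-condition, and E ⊆ X a nonempty set symmetric about 0 with x+y, x−y ∈ E and kx ∈ E for all x,y ∈ E, k ∈ K. Let α: E² → [0,∞) satisfy lim_{n→∞} α(x, n·x) = 0 and lim_{n→∞} α(n·x, n·y) = 0 for all x,y ∈ E. If φ: E → Y_ρ satisfies ρ(φ(x+y) + φ(x−y) − 2φ(x) − 2φ(y)) ≤ α(x,y) for all x,y ∈ E, then φ(x+y) + φ(x−y) = 2φ(x) + 2φ(y) for all x,y ∈ E. -/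
open Filter Topology

theorem quadratic_hyperstability_modular
    {K : Type*} [Field K] {X : Type*} [AddCommGroup X] [Module K X]
    {Y : Type*} [AddCommGroup Y] [Module ℝ Y] (ρ : Y → ℝ)
    (hnonneg : ∀ u, 0 ≤ ρ u)
    (hzero : ∀ u, ρ u = 0 ↔ u = 0)
    (habs : ∀ (a : ℝ) (u : Y), |a| = 1 → ρ (a • u) = ρ u)
    (hconv : ∀ (a b : ℝ) (u v : Y), 0 ≤ a → 0 ≤ b → a + b = 1 →
      ρ (a • u + b • v) ≤ a * ρ u + b * ρ v)
    (τ : ℝ) (hτ : 0 < τ) (hΔ₂ : ∀ u, ρ ((2 : ℝ) • u) ≤ τ * ρ u)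
    (E : Set X) (hEne : E.Nonempty)
    (hEneg : ∀ x ∈ E, -x ∈ E)
    (hEadd : ∀ x ∈ E, ∀ y ∈ E, x + y ∈ E)
    (hEsub : ∀ x ∈ E, ∀ y ∈ E, x - y ∈ E)
    (hEsmul : ∀ (k : K), ∀ x ∈ E, k • x ∈ E)
    (α : X → X → ℝ) (hαnonneg : ∀ x ∈ E, ∀ y ∈ E, 0 ≤ α x y)
    (hα1 : ∀ x ∈ E, Tendsto (fun n : ℕ => α x (n • x)) atTop (𝓝 0))
    (hα2 : ∀ x ∈ E, ∀ y ∈ E, Tendsto (fun n : ℕ => α (n • x) (n • y)) atTop (𝓝 0))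
    (φ : X → Y)
    (hφ : ∀ x ∈ E, ∀ y ∈ E,
      ρ (φ (x + y) + φ (x - y) - (2 : ℝ) • φ x - (2 : ℝ) • φ y) ≤ α x y) :
    ∀ x ∈ E, ∀ y ∈ E,
      φ (x + y) + φ (x - y) = (2 : ℝ) • φ x + (2 : ℝ) • φ y := by
  have hρ0 : ρ 0 = 0 := (hzero 0).mpr rfl
  have hneg : ∀ u, ρ (-u) = ρ u := by
    intro u
    have h := habs (-1) u (by norm_num)
    simpa using h
  set T := max τ 2 with hT
  have hT2 : (2:ℝ) ≤ T := le_max_right _ _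
  have hT0 : (0:ℝ) ≤ T := by linarith
  have hT1 : (1:ℝ) ≤ T/2 := by linarith
  have hΔ : ∀ u, ρ ((2:ℝ) • u) ≤ T * ρ u := fun u =>
    le_trans (hΔ₂ u) (mul_le_mul_of_nonneg_right (le_max_left _ _) (hnonneg u))
  have hsum : ∀ u v : Y, ρ (u + v) ≤ T/2 * (ρ u + ρ v) := by
    intro u v
    have h1 := hconv 2⁻¹ 2⁻¹ ((2:ℝ)•u) ((2:ℝ)•v) (by norm_num) (by norm_num) (by norm_num)
    have h2 : (2⁻¹:ℝ) • ((2:ℝ)•u) + (2⁻¹:ℝ) • ((2:ℝ)•v) = u + v := by module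
    rw [h2] at h1
    have hu := hΔ u; have hv := hΔ v
    nlinarith [hnonneg u, hnonneg v]
  have step : ∀ (u v : Y) (c d : ℝ), ρ u ≤ c → ρ v ≤ d →
      ρ (u + v) ≤ T/2 * (c + d) := by
    intro u v c d hu hv
    calc ρ (u + v) ≤ T/2 * (ρ u + ρ v) := hsum u v
      _ ≤ T/2 * (c + d) :=
        mul_le_mul_of_nonneg_left (add_le_add hu hv) (by linarith)
  have hmemn : ∀ (n : ℕ), ∀ z ∈ E, n • z ∈ E := by
    intro n z hz
    have h := hEsmul (n : K) z hz
    rwa [Nat.cast_smul_eq_nsmul] at h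
  intro x hx y hy
  set D := φ (x + y) + φ (x - y) - (2:ℝ) • φ x - (2:ℝ) • φ y with hD
  -- bounds c_i and the nested bound B
  set c1 : ℕ → ℝ := fun n => α (x + n • x) (y + n • y) with hc1
  set c2 : ℕ → ℝ := fun n => α (x - n • x) (y - n • y) with hc2
  set c3 : ℕ → ℝ := fun n => T * α (n • x) (n • y) with hc3
  set c4 : ℕ → ℝ := fun n => α (x + y) (n • (x + y)) with hc4
  set c5 : ℕ → ℝ := fun n => α (x - y) (n • (x - y)) with hc5
  set c6 : ℕ → ℝ := fun n => T * α x (n • x) with hc6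
  set c7 : ℕ → ℝ := fun n => T * α y (n • y) with hc7
  set B : ℕ → ℝ := fun n =>
    T/2 * (T/2 * (T/2 * (T/2 * (T/2 * (T/2 * (c1 n + c2 n) + c3 n) + c4 n) + c5 n)
      + c6 n) + c7 n) with hB
  have hbound : ∀ n : ℕ, ρ D ≤ B n := by
    intro n
    have hxn : (n • x : X) ∈ E := hmemn n x hx
    have hyn : (n • y : X) ∈ E := hmemn n y hy
    have h1 := hφ (x + n • x) (hEadd x hx _ hxn) (y + n • y) (hEadd y hy _ hyn)
    have h2 := hφ (x - n • x) (hEsub x hx _ hxn) (y - n • y) (hEsub y hy _ hyn)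
    have h3 := hφ (n • x) hxn (n • y) hyn
    have h4 := hφ (x + y) (hEadd x hx y hy) (n • (x + y)) (hmemn n _ (hEadd x hx y hy))
    have h5 := hφ (x - y) (hEsub x hx y hy) (n • (x - y)) (hmemn n _ (hEsub x hx y hy))
    have h6 := hφ x hx (n • x) hxn
    have h7 := hφ y hy (n • y) hyn
    set e1 := φ ((x + n • x) + (y + n • y)) + φ ((x + n • x) - (y + n • y))
      - (2:ℝ) • φ (x + n • x) - (2:ℝ) • φ (y + n • y) with he1
    set e2 := φ ((x - n • x) + (y - n • y)) + φ ((x - n • x) - (y - n • y))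
      - (2:ℝ) • φ (x - n • x) - (2:ℝ) • φ (y - n • y) with he2
    set e3 := φ (n • x + n • y) + φ (n • x - n • y)
      - (2:ℝ) • φ (n • x) - (2:ℝ) • φ (n • y) with he3
    set e4 := φ ((x + y) + n • (x + y)) + φ ((x + y) - n • (x + y))
      - (2:ℝ) • φ (x + y) - (2:ℝ) • φ (n • (x + y)) with he4
    set e5 := φ ((x - y) + n • (x - y)) + φ ((x - y) - n • (x - y))
      - (2:ℝ) • φ (x - y) - (2:ℝ) • φ (n • (x - y)) with he5
    set e6 := φ (x + n • x) + φ (x - n • x)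
      - (2:ℝ) • φ x - (2:ℝ) • φ (n • x) with he6
    set e7 := φ (y + n • y) + φ (y - n • y)
      - (2:ℝ) • φ y - (2:ℝ) • φ (n • y) with he7
    -- the key algebraic identity
    have iden : (2:ℝ) • D = e1 + e2 + (-((2:ℝ) • e3)) + (-e4) + (-e5)
        + (2:ℝ) • e6 + (2:ℝ) • e7 := by
      rw [hD, he1, he2, he3, he4, he5, he6, he7]
      have A0 : n • (x + y) = n • x + n • y := smul_add n x y
      have A0' : n • (x - y) = n • x - n • y := smul_sub n x y
      rw [A0, A0']
      have A1 : (x + n • x) + (y + n • y) = (x + y) + (n • x + n • y) := by abel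
      have A2 : (x + n • x) - (y + n • y) = (x - y) + (n • x - n • y) := by abel
      have A3 : (x - n • x) + (y - n • y) = (x + y) - (n • x + n • y) := by abel
      have A4 : (x - n • x) - (y - n • y) = (x - y) - (n • x - n • y) := by abel
      rw [A1, A2, A3, A4]
      module
    -- bounds on the seven pieces
    have b1 : ρ e1 ≤ c1 n := h1
    have b2 : ρ e2 ≤ c2 n := h2
    have b3 : ρ (-((2:ℝ) • e3)) ≤ c3 n := by
      rw [hneg]
      exact le_trans (hΔ e3) (mul_le_mul_of_nonneg_left h3 hT0)
    have b4 : ρ (-e4) ≤ c4 n := by rw [hneg]; exact h4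
    have b5 : ρ (-e5) ≤ c5 n := by rw [hneg]; exact h5
    have b6 : ρ ((2:ℝ) • e6) ≤ c6 n :=
      le_trans (hΔ e6) (mul_le_mul_of_nonneg_left h6 hT0)
    have b7 : ρ ((2:ℝ) • e7) ≤ c7 n :=
      le_trans (hΔ e7) (mul_le_mul_of_nonneg_left h7 hT0)
    have hW : ρ ((2:ℝ) • D) ≤ B n := by
      rw [iden]
      exact step _ _ _ _ (step _ _ _ _ (step _ _ _ _ (step _ _ _ _ (step _ _ _ _
        (step _ _ _ _ b1 b2) b3) b4) b5) b6) b7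
    have hDhalf : D = (2⁻¹:ℝ) • ((2:ℝ) • D) := by module
    calc ρ D = ρ ((2⁻¹:ℝ) • ((2:ℝ) • D)) := by rw [← hDhalf]
      _ ≤ 2⁻¹ * ρ ((2:ℝ) • D) + 2⁻¹ * ρ (0:Y) := by
          have := hconv 2⁻¹ 2⁻¹ ((2:ℝ) • D) 0 (by norm_num) (by norm_num) (by norm_num)
          simpa using this
      _ ≤ ρ ((2:ℝ) • D) := by
          rw [hρ0]
          have := hnonneg ((2:ℝ) • D)
          linarith
      _ ≤ B n := hW
  -- the bound tends to 0
  have t1 : Tendsto c1 atTop (𝓝 0) := by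
    have heq : c1 = (fun n : ℕ => α (n • x) (n • y)) ∘ (fun n => n + 1) := by
      funext n
      simp only [hc1, Function.comp]
      congr 1 <;> rw [succ_nsmul] <;> exact (add_comm _ _)
    rw [heq]
    exact (hα2 x hx y hy).comp (tendsto_add_atTop_nat 1)
  have t2 : Tendsto c2 atTop (𝓝 0) := by
    rw [← tendsto_add_atTop_iff_nat 1]
    have heq : (fun n : ℕ => c2 (n + 1)) = fun n : ℕ => α (n • (-x)) (n • (-y)) := by
      funext n
      simp only [hc2]
      congr 1 <;> rw [succ_nsmul, smul_neg] <;> abel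
    rw [heq]
    exact hα2 (-x) (hEneg x hx) (-y) (hEneg y hy)
  have t3 : Tendsto c3 atTop (𝓝 0) := by
    have := (hα2 x hx y hy).const_mul T
    simpa using this
  have t4 : Tendsto c4 atTop (𝓝 0) := hα1 (x + y) (hEadd x hx y hy)
  have t5 : Tendsto c5 atTop (𝓝 0) := hα1 (x - y) (hEsub x hx y hy)
  have t6 : Tendsto c6 atTop (𝓝 0) := by
    have := (hα1 x hx).const_mul T
    simpa using this
  have t7 : Tendsto c7 atTop (𝓝 0) := by
    have := (hα1 y hy).const_mul T
    simpa using this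
  have hBlim : Tendsto B atTop (𝓝 0) := by
    have := (((((((((((t1.add t2).const_mul (T/2)).add t3).const_mul (T/2)).add
      t4).const_mul (T/2)).add t5).const_mul (T/2)).add t6).const_mul (T/2)).add
      t7).const_mul (T/2)
    simpa using this
  have hρD : ρ D ≤ 0 := ge_of_tendsto' hBlim hbound
  have hD0 : D = 0 := (hzero D).mp (le_antisymm hρD (hnonneg D))
  rw [hD, sub_sub, sub_eq_zero] at hD0
  exact hD0
end

section
/- Hyperstability of the m-dimensional quadratic equation in modular spaces: Let X be a vector space over K, Y_ρ a convex modular space with the Δ₂-condition, E ⊆ X nonempty, symmetric about 0, closed under +, −, and scalar multiplication, and m ≥ 2. Let φ: E^m → [0,∞) satisfy lim_{n→∞} φ(x, nx, …, nx) = 0 and lim_{n→∞} φ(nx₁, …, nx_m) = 0. If f: E → Y_ρ satisfies ρ( f(∑_{i=1}^m x_i) + ∑_{1≤i<j≤m} f(x_i − x_j) − m∑_{i=1}^m f(x_i) ) ≤ φ(x₁,…,x_m) for all x₁,…,x_m ∈ E, then f(∑ x_i) + ∑_{i<j} f(x_i − x_j) = m∑ f(x_i) for all x₁,…,x_m ∈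 E. -/
/-!
Write `m = n + 1`. The defect `quadDefect x f` is additive in `f`, and `f 0 = 0` because the defect
vanishes at the zero tuple. On the tuple `(z, (k+1)z, …, (k+1)z)` the defect writes `(n+1) f z` as
a combination of `f` at `(1 + n(k+1))z`, `k(-z)` and `(k+1)z`, minus an error of modular size at
most `φ (z, (k+1)z, …)`. Applying `quadDefect x` to this identity, `(n+1) • quadDefect x f` is, for
every `k`, a fixed combination of defects at dilates of `x` and of the defect of the error, all of
which are modularly null as `k → ∞` by the limit hypotheses on `φ`. Under Δ₂ we have
`ρ (u + v) ≤ τ/2 (ρ u + ρ v)`, so modularly null sequences are closed under sums, and the constant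
`ρ ((n+1) • quadDefect x f)` vanishes.
-/

open Filter Topology

structure IsConvexModular {Y : Type*} [AddCommGroup Y] [Module ℝ Y] (ρ : Y → ℝ) : Prop where
  nonneg : ∀ u, 0 ≤ ρ u
  eq_zero_iff : ∀ u, ρ u = 0 ↔ u = 0
  abs_smul : ∀ (c : ℝ) (u : Y), |c| = 1 → ρ (c • u) = ρ u
  convex : ∀ (c d : ℝ) (u v : Y), 0 ≤ c → 0 ≤ d → c + d = 1 →
    ρ (c • u + d • v) ≤ c * ρ u + d * ρ v

namespace IsConvexModular

variable {Y : Type*} [AddCommGroup Y] [Module ℝ Y] {ρ : Y → ℝ}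

theorem map_zero (hρ : IsConvexModular ρ) : ρ 0 = 0 := (hρ.eq_zero_iff 0).2 rfl

theorem map_neg (hρ : IsConvexModular ρ) (u : Y) : ρ (-u) = ρ u := by
  simpa using hρ.abs_smul (-1) u (by norm_num)

theorem add_le (hρ : IsConvexModular ρ) {τ : ℝ} (hτ : 0 ≤ τ)
    (hΔ₂ : ∀ u, ρ ((2 : ℝ) • u) ≤ τ * ρ u) (u v : Y) :
    ρ (u + v) ≤ τ / 2 * (ρ u + ρ v) := by
  have hmid : (2 : ℝ) • ((1 / 2 : ℝ) • u + (1 / 2 : ℝ) • v) = u + v := by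
    rw [smul_add, smul_smul, smul_smul]; norm_num
  calc ρ (u + v) ≤ τ * ρ ((1 / 2 : ℝ) • u + (1 / 2 : ℝ) • v) := hmid ▸ hΔ₂ _
    _ ≤ τ * (1 / 2 * ρ u + 1 / 2 * ρ v) :=
      mul_le_mul_of_nonneg_left (hρ.convex _ _ u v (by norm_num) (by norm_num) (by norm_num)) hτ
    _ = τ / 2 * (ρ u + ρ v) := by ring

theorem eq_zero_of_tendsto (hρ : IsConvexModular ρ) {ι : Type*} {l : Filter ι} [l.NeBot] {u : Y}
    (h : Tendsto (fun _ => ρ u) l (𝓝 0)) : u = 0 :=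
  (hρ.eq_zero_iff u).1 (tendsto_nhds_unique tendsto_const_nhds h)

section Tendsto

variable {ι : Type*} {l : Filter ι} {u v : ι → Y} {C : ℝ}

theorem tendsto_add (hρ : IsConvexModular ρ) (hadd : ∀ u v, ρ (u + v) ≤ C * (ρ u + ρ v))
    (hu : Tendsto (fun k => ρ (u k)) l (𝓝 0)) (hv : Tendsto (fun k => ρ (v k)) l (𝓝 0)) :
    Tendsto (fun k => ρ (u k + v k)) l (𝓝 0) := by
  refine squeeze_zero (fun k => hρ.nonneg _) (fun k => hadd (u k) (v k)) ?_
  simpa using (hu.add hv).const_mul C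

theorem tendsto_sub (hρ : IsConvexModular ρ) (hadd : ∀ u v, ρ (u + v) ≤ C * (ρ u + ρ v))
    (hu : Tendsto (fun k => ρ (u k)) l (𝓝 0)) (hv : Tendsto (fun k => ρ (v k)) l (𝓝 0)) :
    Tendsto (fun k => ρ (u k - v k)) l (𝓝 0) := by
  simp_rw [sub_eq_add_neg]
  exact hρ.tendsto_add hadd hu (by simpa only [hρ.map_neg] using hv)

theorem tendsto_sum (hρ : IsConvexModular ρ) (hadd : ∀ u v, ρ (u + v) ≤ C * (ρ u + ρ v))
    {α : Type*} (s : Finset α) {u : α → ι → Y}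
    (hu : ∀ a ∈ s, Tendsto (fun k => ρ (u a k)) l (𝓝 0)) :
    Tendsto (fun k => ρ (∑ a ∈ s, u a k)) l (𝓝 0) := by
  classical
  induction s using Finset.induction_on with
  | empty => simpa [hρ.map_zero] using tendsto_const_nhds
  | insert a s ha ih =>
    simp only [Finset.sum_insert ha]
    exact hρ.tendsto_add hadd (hu a (Finset.mem_insert_self a s))
      (ih fun b hb => hu b (Finset.mem_insert_of_mem hb))

theorem tendsto_nsmul (hρ : IsConvexModular ρ) (hadd : ∀ u v, ρ (u + v) ≤ C * (ρ u + ρ v))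
    (n : ℕ) (hu : Tendsto (fun k => ρ (u k)) l (𝓝 0)) :
    Tendsto (fun k => ρ (n • u k)) l (𝓝 0) := by
  simpa using hρ.tendsto_sum hadd (Finset.range n) fun _ _ => hu

end Tendsto

end IsConvexModular

section QuadDefect

variable {X X' Y : Type*} [AddCommGroup X] [AddCommGroup X'] [AddCommGroup Y] {m : ℕ}

def quadDefect (x : Fin m → X) : (X → Y) →+ Y where
  toFun f := f (∑ i, x i)
    + ∑ p ∈ Finset.univ.filter (fun p : Fin m × Fin m => p.1 < p.2), f (x p.1 - x p.2)
    - m • ∑ i, f (x i)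
  map_zero' := by simp
  map_add' f g := by
    simp only [Pi.add_apply, Finset.sum_add_distrib, nsmul_add]
    abel

theorem quadDefect_apply (x : Fin m → X) (f : X → Y) :
    quadDefect x f = f (∑ i, x i)
      + ∑ p ∈ Finset.univ.filter (fun p : Fin m × Fin m => p.1 < p.2), f (x p.1 - x p.2)
      - m • ∑ i, f (x i) := rfl

theorem quadDefect_comp (L : X →+ X') (f : X' → Y) (x : Fin m → X) :
    quadDefect x (f ∘ L) = quadDefect (L ∘ x) f := by
  simp [quadDefect_apply, map_sum]

theorem apply_zero_eq_zero_of_quadDefect_zero [IsAddTorsionFree Y] (hm : 2 ≤ m) {f : X → Y}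
    (h : quadDefect (fun _ : Fin m => (0 : X)) f = 0) : f 0 = 0 := by
  set T := Finset.univ.filter (fun p : Fin m × Fin m => p.1 < p.2)
  have hT : T.card ≤ m * m - m := by
    have hsub : T ⊆ Finset.univ.offDiag := fun p hp =>
      Finset.mem_offDiag.2 ⟨Finset.mem_univ _, Finset.mem_univ _, (Finset.mem_filter.1 hp).2.ne⟩
    simpa using Finset.card_le_card hsub
  have hlt : 1 + T.card < m * m := by
    have : 2 * 2 ≤ m * m := Nat.mul_le_mul hm hm
    omega
  have hcount : (m * m) • f 0 = (1 + T.card) • f 0 := by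
    rw [quadDefect_apply] at h
    simp only [sub_zero, smul_zero, Finset.sum_const, Finset.card_univ, Fintype.card_fin,
      smul_smul] at h
    rw [add_smul, one_smul]
    exact (sub_eq_zero.1 h).symm
  have hvanish : (m * m - (1 + T.card)) • f 0 = 0 := by
    rw [sub_nsmul _ hlt.le, hcount, add_neg_cancel]
  exact (nsmul_eq_zero_iff_right (by omega)).1 hvanish

theorem quadDefect_ite_zero {n : ℕ} {f : X → Y} (hf : f 0 = 0) (a b : X) :
    quadDefect (fun i : Fin (n + 1) => if i = 0 then a else b) f
      = f (a + n • b) + n • f (a - b) - (n + 1) • (f a + n • f b) := by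
  rw [quadDefect_apply, Finset.sum_filter, Fintype.sum_prod_type]
  simp [Fin.sum_univ_succ, Fin.succ_ne_zero, hf]

theorem succ_nsmul_apply_eq_sub_quadDefect {n : ℕ} {f : X → Y} (hf : f 0 = 0) (k : ℕ)
    (z : X) :
    (n + 1) • f z
      = f ((1 + n * (k + 1)) • z) + n • f (k • -z) - ((n + 1) * n) • f ((k + 1) • z)
        - quadDefect (fun i : Fin (n + 1) => if i = 0 then z else (k + 1) • z) f := by
  have h₁ : (1 + n * (k + 1)) • z = z + n • (k + 1) • z := by
    rw [add_smul, one_smul, mul_smul]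
  have h₂ : z - (k + 1) • z = k • -z := by
    rw [smul_neg, succ_nsmul]; abel
  rw [quadDefect_ite_zero hf, h₁, h₂, smul_add, smul_smul (n + 1) n]
  abel

theorem succ_nsmul_quadDefect {n : ℕ} {f : X → Y} (hf : f 0 = 0) (x : Fin (n + 1) → X)
    (k : ℕ) :
    (n + 1) • quadDefect x f
      = quadDefect (fun i => (1 + n * (k + 1)) • x i) f + n • quadDefect (fun i => k • -x i) f
        - ((n + 1) * n) • quadDefect (fun i => (k + 1) • x i) f
        - quadDefect x
            (fun z => quadDefect (fun i : Fin (n + 1) => if i = 0 then z else (k + 1) • z) f) := by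
  set L₁ := DistribSMul.toAddMonoidHom X (1 + n * (k + 1))
  set L₂ := (DistribSMul.toAddMonoidHom X k).comp (negAddMonoidHom : X →+ X)
  set L₃ := DistribSMul.toAddMonoidHom X (k + 1)
  have hfun : (n + 1) • f = f ∘ L₁ + n • (f ∘ L₂) - ((n + 1) * n) • (f ∘ L₃)
      - fun z => quadDefect (fun i : Fin (n + 1) => if i = 0 then z else (k + 1) • z) f :=
    funext (succ_nsmul_apply_eq_sub_quadDefect hf k)
  rw [← map_nsmul, hfun]
  simp only [map_sub, map_add, map_nsmul, quadDefect_comp]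
  rfl

end QuadDefect

theorem IsConvexModular.tendsto_quadDefect {X Y : Type*} [AddCommGroup X] [AddCommGroup Y]
    [Module ℝ Y] {ρ : Y → ℝ} (hρ : IsConvexModular ρ) {C : ℝ}
    (hadd : ∀ u v, ρ (u + v) ≤ C * (ρ u + ρ v)) {ι : Type*} {l : Filter ι} {m : ℕ}
    {g : ι → X → Y} (x : Fin m → X)
    (hsum : Tendsto (fun k => ρ (g k (∑ i, x i))) l (𝓝 0))
    (hsub : ∀ i j, Tendsto (fun k => ρ (g k (x i - x j))) l (𝓝 0))
    (hx : ∀ i, Tendsto (fun k => ρ (g k (x i))) l (𝓝 0)) :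
    Tendsto (fun k => ρ (quadDefect x (g k))) l (𝓝 0) :=
  hρ.tendsto_sub hadd (hρ.tendsto_add hadd hsum (hρ.tendsto_sum hadd _ fun p _ => hsub p.1 p.2))
    (hρ.tendsto_nsmul hadd m (hρ.tendsto_sum hadd _ fun i _ => hx i))

theorem mdim_quadratic_hyperstability_modular
    {X : Type*} [AddCommGroup X]
    {Y : Type*} [AddCommGroup Y] [Module ℝ Y] (ρ : Y → ℝ)
    (hnonneg : ∀ u, 0 ≤ ρ u)
    (hzero : ∀ u, ρ u = 0 ↔ u = 0)
    (habs : ∀ (c : ℝ) (u : Y), |c| = 1 → ρ (c • u) = ρ u)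
    (hconv : ∀ (c d : ℝ) (u v : Y), 0 ≤ c → 0 ≤ d → c + d = 1 →
      ρ (c • u + d • v) ≤ c * ρ u + d * ρ v)
    (τ : ℝ) (hτ : 0 < τ) (hΔ₂ : ∀ u, ρ ((2 : ℝ) • u) ≤ τ * ρ u)
    (E : Set X) (hEne : E.Nonempty)
    (hEsub : ∀ x ∈ E, ∀ y ∈ E, x - y ∈ E)
    (m : ℕ) (hm : 2 ≤ m)
    (φ : (Fin m → X) → ℝ)
    (hφ1 : ∀ x ∈ E,
      Tendsto (fun n : ℕ => φ (fun i => if i = ⟨0, by omega⟩ then x else n • x))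
        atTop (𝓝 0))
    (hφ2 : ∀ x : Fin m → X, (∀ i, x i ∈ E) →
      Tendsto (fun n : ℕ => φ (fun i => n • x i)) atTop (𝓝 0))
    (f : X → Y)
    (hf : ∀ x : Fin m → X, (∀ i, x i ∈ E) →
      ρ (f (∑ i, x i)
          + ∑ p ∈ Finset.univ.filter (fun p : Fin m × Fin m => p.1 < p.2),
              f (x p.1 - x p.2)
          - m • ∑ i, f (x i)) ≤ φ x) :
    ∀ x : Fin m → X, (∀ i, x i ∈ E) →
      f (∑ i, x i)
        + ∑ p ∈ Finset.univ.filter (fun p : Fin m × Fin m => p.1 < p.2),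
            f (x p.1 - x p.2)
        = m • ∑ i, f (x i) := by
  have hρ : IsConvexModular ρ := ⟨hnonneg, hzero, habs, hconv⟩
  have hadd := hρ.add_le hτ.le hΔ₂
  have : IsAddTorsionFree Y := .of_isTorsionFree ℝ Y
  let G : AddSubgroup X := .ofSub E hEne fun x hx y hy => by
    simpa only [sub_eq_add_neg] using hEsub x hx y hy
  have hdefect (y : ℕ → Fin m → X) (hy : ∀ k i, y k i ∈ G)
      (hφ : Tendsto (fun k => φ (y k)) atTop (𝓝 0)) :
      Tendsto (fun k => ρ (quadDefect (y k) f)) atTop (𝓝 0) :=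
    squeeze_zero (fun _ => hnonneg _) (fun k => hf _ (hy k)) hφ
  have hf0 : f 0 = 0 := apply_zero_eq_zero_of_quadDefect_zero hm <| hρ.eq_zero_of_tendsto <| by
    simpa only [smul_zero] using
      hdefect _ (fun _ _ => G.nsmul_mem G.zero_mem _) (hφ2 0 fun _ => G.zero_mem)
  obtain ⟨n, rfl⟩ : ∃ n, m = n + 1 := ⟨m - 1, by omega⟩
  intro x hx
  rw [← sub_eq_zero]
  refine (nsmul_eq_zero_iff_right n.succ_ne_zero).1
    (hρ.eq_zero_of_tendsto (l := (atTop : Filter ℕ)) ?_)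
  refine Tendsto.congr (fun k => congrArg ρ (succ_nsmul_quadDefect hf0 x k).symm) ?_
  have hdil : Tendsto (fun k : ℕ => 1 + n * (k + 1)) atTop atTop :=
    tendsto_atTop_mono (fun k => show k ≤ _ by nlinarith) tendsto_id
  have herror (z) (hz : z ∈ G) : Tendsto (fun k => ρ (quadDefect
      (fun i : Fin (n + 1) => if i = 0 then z else (k + 1) • z) f)) atTop (𝓝 0) :=
    hdefect _ (fun k i => by split_ifs <;> [exact hz; exact G.nsmul_mem hz _])
      ((hφ1 z hz).comp (tendsto_add_atTop_nat 1))
  refine hρ.tendsto_sub hadd (hρ.tendsto_sub hadd (hρ.tendsto_add hadd ?_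
    (hρ.tendsto_nsmul hadd n ?_)) (hρ.tendsto_nsmul hadd _ ?_))
    (hρ.tendsto_quadDefect hadd x (herror _ (G.sum_mem fun i _ => hx i))
      (fun i j => herror _ (G.sub_mem (hx i) (hx j))) fun i => herror _ (hx i))
  · exact hdefect _ (fun k i => G.nsmul_mem (hx i) _) ((hφ2 x hx).comp hdil)
  · exact hdefect _ (fun k i => G.nsmul_mem (G.neg_mem (hx i)) _)
      (hφ2 _ fun i => G.neg_mem (hx i))
  · exact hdefect _ (fun k i => G.nsmul_mem (hx i) _)
      ((hφ2 x hx).comp (tendsto_add_atTop_nat 1))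
end

section
/- Auxiliary limit representation for the quadratic equation: Under the hypotheses of the modular quadratic hyperstability theorem (ρ convex with Δ₂, α(x, nx) → 0), any φ: E → Y_ρ satisfying ρ(φ(x+y)+φ(x−y)−2φ(x)−2φ(y)) ≤ α(x,y) admits, for each x ∈ E, the representation φ(x) = ρ-lim_{n→∞} [ (1/2)φ((n+1)x) + (1/2)φ((1−n)x) − φ(nx) ]. -/
open Filter Topology

theorem quadratic_limit_representation_modular
    {K : Type*} [Field K] {X : Type*} [AddCommGroup X] [Module K X]
    {Y : Type*} [AddCommGroup Y] [Module ℝ Y] (ρ : Y → ℝ)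
    (hnonneg : ∀ u, 0 ≤ ρ u)
    (hzero : ∀ u, ρ u = 0 ↔ u = 0)
    (habs : ∀ (c : ℝ) (u : Y), |c| = 1 → ρ (c • u) = ρ u)
    (hconv : ∀ (c d : ℝ) (u v : Y), 0 ≤ c → 0 ≤ d → c + d = 1 →
      ρ (c • u + d • v) ≤ c * ρ u + d * ρ v)
    (τ : ℝ) (hτ : 0 < τ) (hΔ₂ : ∀ u, ρ ((2 : ℝ) • u) ≤ τ * ρ u)
    (E : Set X) (hEne : E.Nonempty)
    (hEneg : ∀ x ∈ E, -x ∈ E)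
    (hEadd : ∀ x ∈ E, ∀ y ∈ E, x + y ∈ E)
    (hEsub : ∀ x ∈ E, ∀ y ∈ E, x - y ∈ E)
    (hEsmul : ∀ (k : K), ∀ x ∈ E, k • x ∈ E)
    (α : X → X → ℝ) (hαnonneg : ∀ x ∈ E, ∀ y ∈ E, 0 ≤ α x y)
    (hα1 : ∀ x ∈ E, Tendsto (fun n : ℕ => α x (n • x)) atTop (𝓝 0))
    (φ : X → Y)
    (hφ : ∀ x ∈ E, ∀ y ∈ E,
      ρ (φ (x + y) + φ (x - y) - (2 : ℝ) • φ x - (2 : ℝ) • φ y) ≤ α x y) :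
    ∀ x ∈ E,
      Tendsto (fun n : ℕ =>
          ρ (((2 : ℝ)⁻¹ • φ ((n + 1) • x) + (2 : ℝ)⁻¹ • φ ((1 - (n : ℤ)) • x)
              - φ (n • x)) - φ x)) atTop (𝓝 0) := by
  intro x hx
  have hρ0 : ρ 0 = 0 := (hzero 0).mpr rfl
  -- membership of n • x in E
  have hmem : ∀ n : ℕ, (n • x) ∈ E := by
    intro n
    induction n with
    | zero => simpa using (by simpa using hEsub x hx x hx)
    | succ k ih => rw [succ_nsmul]; exact hEadd _ ih x hx
  -- the key bound
  have key : ∀ n : ℕ,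
      ρ (((2 : ℝ)⁻¹ • φ ((n + 1) • x) + (2 : ℝ)⁻¹ • φ ((1 - (n : ℤ)) • x)
          - φ (n • x)) - φ x) ≤ (2 : ℝ)⁻¹ * α x (n • x) := by
    intro n
    have h1 := hφ x hx (n • x) (hmem n)
    set u : Y := φ (x + n • x) + φ (x - n • x) - (2 : ℝ) • φ x - (2 : ℝ) • φ (n • x)
    have h2 : ρ ((2 : ℝ)⁻¹ • u) ≤ (2 : ℝ)⁻¹ * ρ u := by
      have := hconv (2 : ℝ)⁻¹ (2 : ℝ)⁻¹ u 0 (by norm_num) (by norm_num) (by norm_num)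
      simpa [hρ0] using this
    have hx1 : x + n • x = (n + 1) • x := by
      rw [succ_nsmul]; abel
    have hx2 : x - n • x = (1 - (n : ℤ)) • x := by
      rw [sub_zsmul, one_zsmul, natCast_zsmul]; exact sub_eq_add_neg _ _
    have heq : ((2 : ℝ)⁻¹ • φ ((n + 1) • x) + (2 : ℝ)⁻¹ • φ ((1 - (n : ℤ)) • x)
          - φ (n • x)) - φ x = (2 : ℝ)⁻¹ • u := by
      simp only [u, ← hx1, ← hx2, smul_sub, smul_add, smul_smul]
      norm_num
      abel
    rw [heq]
    calc ρ ((2 : ℝ)⁻¹ • u) ≤ (2 : ℝ)⁻¹ * ρ u := h2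
      _ ≤ (2 : ℝ)⁻¹ * α x (n • x) := by
          apply mul_le_mul_of_nonneg_left h1 (by norm_num)
  apply squeeze_zero (fun n => hnonneg _) key
  have := (hα1 x hx).const_mul (2 : ℝ)⁻¹
  simpa using this
end
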